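/- arXiv:2007.16055 — 6 statements merged into one kernel-verified Lean document; each statement's English description precedes it below -/
import Mathlib

section
/- Suppose Z₋ < Z₊ are rest points of V (V′(Z₋) = V′(Z₊) = 0) with V(Z₋) = V(Z₊), V(z) < V(Z₋) for all z strictly between Z₋ and Z₊, and V″(Z₋) < 0, V″(Z₊) < 0. Then every solution ζ of ζ″ + V′(ζ) = 0 with ζ(x) → Z₋ as x → −∞ and ζ(x) → Z₊ as x → +∞ satisfies Z₋ < ζ(x) < Z₊ and ζ′(x) > 0 for every x ∈ ℝ; in particular ζ is strictly increasing. -/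
/-!
Along a solution the energy `ζ′²/2 + V(ζ)` is conserved, and sampling it at points near `-∞`
where `ζ′` is small shows that it equals `V(Z₋) = V(Z₊)`. Hence `ζ′` vanishes wherever `ζ` meets
`Z₋` or `Z₊`; with `V′ = 0` there, uniqueness for the first-order system satisfied by `(ζ, ζ′)`
would make `ζ` constant, so `ζ` never reaches the rest points and by continuity stays strictly
between them. There `V < V(Z₋)`, so `ζ′` never vanishes, and it cannot be negative because `ζ`
climbs from `Z₋` to `Z₊`.
-/

open Filter Topology Set

theorem Continuous.forall_lt_or_forall_gt_of_forall_ne {X α : Type*} [TopologicalSpace X]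
    [PreconnectedSpace X] [LinearOrder α] [TopologicalSpace α] [OrderClosedTopology α]
    {f : X → α} {c : α} (hf : Continuous f) (hne : ∀ x, f x ≠ c) :
    (∀ x, f x < c) ∨ ∀ x, c < f x := by
  by_contra! h
  obtain ⟨x, hx⟩ := mem_range_of_exists_le_of_exists_ge hf h.2 h.1
  exact hne x hx

theorem exists_seq_tendsto_atBot_deriv_tendsto_zero {f : ℝ → ℝ} {a : ℝ}
    (hf : Differentiable ℝ f) (h : Tendsto f atBot (𝓝 a)) :
    ∃ ξ : ℕ → ℝ, Tendsto ξ atTop atBot ∧ Tendsto (deriv f ∘ ξ) atTop (𝓝 0) := by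
  have hmvt (n : ℕ) :
      ∃ c ∈ Ioo (-(n : ℝ) - 1) (-n), deriv f c = f (-n) - f (-n - 1) := by
    simpa using exists_hasDerivAt_eq_slope f (deriv f) (by linarith : -(n : ℝ) - 1 < -n)
      hf.continuous.continuousOn fun x _ => (hf x).hasDerivAt
  choose ξ hξ hslope using hmvt
  have hneg : Tendsto (fun n : ℕ => -(n : ℝ)) atTop atBot :=
    tendsto_neg_atBot_iff.mpr tendsto_natCast_atTop_atTop
  refine ⟨ξ, tendsto_atBot_mono (fun n => (hξ n).2.le) hneg, ?_⟩
  simp only [Function.comp_def, hslope]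
  simpa [sub_eq_add_neg] using
    (h.comp hneg).sub (h.comp (tendsto_atBot_add_const_right _ (-1) hneg))

theorem ODE_solution_unique_of_locallyLipschitz {E : Type*} [NormedAddCommGroup E]
    [NormedSpace ℝ E] {v : E → E} (hv : LocallyLipschitz v) {f g : ℝ → E}
    (hf : ∀ t, HasDerivAt f (v (f t)) t) (hg : ∀ t, HasDerivAt g (v (g t)) t) {t₀ : ℝ}
    (heq : f t₀ = g t₀) : f = g := by
  have hclopen : IsClopen {t | f t = g t} := by
    refine ⟨isClosed_eq (continuous_iff_continuousAt.2 fun t => (hf t).continuousAt)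
      (continuous_iff_continuousAt.2 fun t => (hg t).continuousAt), ?_⟩
    refine isOpen_iff_mem_nhds.2 fun t (ht : f t = g t) => ?_
    obtain ⟨K, U, hU, hKU⟩ := hv (f t)
    have hfU : ∀ᶠ s in 𝓝 t, f s ∈ U := (hf t).continuousAt hU
    have hgU : ∀ᶠ s in 𝓝 t, g s ∈ U := (hg t).continuousAt (ht ▸ hU)
    exact ODE_solution_unique_of_eventually (v := fun _ => v) (s := fun _ => U)
      (.of_forall fun _ => hKU) (hfU.mono fun s hs => ⟨hf s, hs⟩)
      (hgU.mono fun s hs => ⟨hg s, hs⟩) ht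
  exact funext (eq_univ_iff_forall.1 (hclopen.eq_univ ⟨t₀, heq⟩))

noncomputable def energy (V ζ : ℝ → ℝ) (x : ℝ) : ℝ := deriv ζ x ^ 2 / 2 + V (ζ x)

section Energy

variable {V ζ : ℝ → ℝ}

theorem hasDerivAt_energy (hV : Differentiable ℝ V) (hζ : Differentiable ℝ ζ)
    (hζ' : Differentiable ℝ (deriv ζ)) (x : ℝ) :
    HasDerivAt (energy V ζ) (deriv ζ x * (deriv (deriv ζ) x + deriv V (ζ x))) x := by
  refine ((((hζ' x).hasDerivAt.fun_pow 2).div_const 2).add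
    ((hV (ζ x)).hasDerivAt.comp x (hζ x).hasDerivAt)).congr_deriv ?_
  push_cast
  ring

theorem energy_eq_energy_of_ode (hV : Differentiable ℝ V) (hζ : Differentiable ℝ ζ)
    (hζ' : Differentiable ℝ (deriv ζ)) (hode : ∀ x, deriv (deriv ζ) x + deriv V (ζ x) = 0)
    (x y : ℝ) : energy V ζ x = energy V ζ y :=
  is_const_of_deriv_eq_zero (fun z => (hasDerivAt_energy hV hζ hζ' z).differentiableAt)
    (fun z => by simpa [hode z] using (hasDerivAt_energy hV hζ hζ' z).deriv) x y

theorem energy_eq_of_tendsto_atBot (hV : Continuous V) (hζ : Differentiable ℝ ζ)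
    (hE : ∀ x y, energy V ζ x = energy V ζ y) {Z : ℝ} (h : Tendsto ζ atBot (𝓝 Z)) (x : ℝ) :
    energy V ζ x = V Z := by
  obtain ⟨ξ, hξ, hdξ⟩ := exists_seq_tendsto_atBot_deriv_tendsto_zero hζ h
  have hlim : Tendsto (energy V ζ ∘ ξ) atTop (𝓝 (0 ^ 2 / 2 + V Z)) :=
    ((hdξ.pow 2).div_const 2).add ((hV.tendsto Z).comp (h.comp hξ))
  rw [show energy V ζ ∘ ξ = fun _ => energy V ζ x from funext fun n => hE _ _] at hlim
  simpa using tendsto_nhds_unique tendsto_const_nhds hlim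

theorem eq_const_of_eq_rest_point_of_deriv_eq_zero (hV : LocallyLipschitz (deriv V))
    (hζ : Differentiable ℝ ζ) (hζ' : Differentiable ℝ (deriv ζ))
    (hode : ∀ x, deriv (deriv ζ) x + deriv V (ζ x) = 0)
    {Z x₀ : ℝ} (hZ : deriv V Z = 0) (h₀ : ζ x₀ = Z) (h₁ : deriv ζ x₀ = 0) :
    ζ = fun _ => Z := by
  set v : ℝ × ℝ → ℝ × ℝ := fun p => (p.2, -deriv V p.1)
  have hv : LocallyLipschitz v := LipschitzWith.prod_snd.locallyLipschitz.prodMk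
    (LipschitzWith.id.neg.locallyLipschitz.comp
      (hV.comp LipschitzWith.prod_fst.locallyLipschitz))
  have hsol (x : ℝ) :
      HasDerivAt (fun x => (ζ x, deriv ζ x)) (v (ζ x, deriv ζ x)) x := by
    simpa [v, eq_neg_of_add_eq_zero_left (hode x)] using
      (hζ x).hasDerivAt.prodMk (hζ' x).hasDerivAt
  have hconst (x : ℝ) : HasDerivAt (fun _ => (Z, 0)) (v (Z, 0)) x := by
    simp only [v, hZ, neg_zero]
    exact hasDerivAt_const x _
  have := ODE_solution_unique_of_locallyLipschitz hv hsol hconst (t₀ := x₀)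
    (by simp [h₀, h₁])
  exact funext fun x => congrArg Prod.fst (congrFun this x)

theorem eq_const_of_energy_eq (hV : LocallyLipschitz (deriv V)) (hζ : Differentiable ℝ ζ)
    (hζ' : Differentiable ℝ (deriv ζ)) (hode : ∀ x, deriv (deriv ζ) x + deriv V (ζ x) = 0)
    {Z x₀ : ℝ} (hZ : deriv V Z = 0) (hlevel : ∀ x, energy V ζ x = V Z) (h₀ : ζ x₀ = Z) :
    ζ = fun _ => Z :=
  eq_const_of_eq_rest_point_of_deriv_eq_zero hV hζ hζ' hode hZ h₀
    (by simpa [energy, h₀] using hlevel x₀)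

end Energy

theorem heteroclinic_monotone_general (V : ℝ → ℝ) (hV : ContDiff ℝ 2 V)
    (Zm Zp : ℝ) (hlt : Zm < Zp)
    (hrest_m : deriv V Zm = 0) (hrest_p : deriv V Zp = 0)
    (hconj : V Zm = V Zp)
    (hhetero : ∀ z, Zm < z → z < Zp → V z < V Zm)
    (ζ : ℝ → ℝ) (hζ : ContDiff ℝ 2 ζ)
    (hode : ∀ x : ℝ, deriv (deriv ζ) x + deriv V (ζ x) = 0)
    (hbot : Tendsto ζ atBot (nhds Zm)) (htop : Tendsto ζ atTop (nhds Zp)) :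
    (∀ x : ℝ, Zm < ζ x ∧ ζ x < Zp ∧ 0 < deriv ζ x) ∧ StrictMono ζ := by
  have hζ₁ : Differentiable ℝ ζ := hζ.differentiable two_ne_zero
  have hζ₂ : Differentiable ℝ (deriv ζ) := hζ.differentiable_deriv_two
  have hlevel : ∀ x, energy V ζ x = V Zm := energy_eq_of_tendsto_atBot hV.continuous hζ₁
    (energy_eq_energy_of_ode (hV.differentiable two_ne_zero) hζ₁ hζ₂ hode) hbot
  have havoid (Z : ℝ) (hZ : deriv V Z = 0) (hVZ : V Zm = V Z) (x : ℝ) : ζ x ≠ Z := by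
    intro hx
    have hconst := eq_const_of_energy_eq (hV.iterate_deriv' 1 1).locallyLipschitz hζ₁ hζ₂ hode
      hZ (fun y => (hlevel y).trans hVZ) hx
    rw [hconst] at hbot htop
    exact hlt.ne ((tendsto_nhds_unique tendsto_const_nhds hbot).symm.trans
      (tendsto_nhds_unique tendsto_const_nhds htop))
  have hbelow : ∀ x, ζ x < Zp := by
    obtain ⟨a, ha⟩ := (hbot.eventually_lt_const hlt).exists
    exact (hζ₁.continuous.forall_lt_or_forall_gt_of_forall_ne
      (havoid Zp hrest_p hconj)).resolve_right fun h => lt_asymm (h a) ha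
  have habove : ∀ x, Zm < ζ x := by
    obtain ⟨a, ha⟩ := (htop.eventually_const_lt hlt).exists
    exact (hζ₁.continuous.forall_lt_or_forall_gt_of_forall_ne
      (havoid Zm hrest_m rfl)).resolve_left fun h => lt_asymm (h a) ha
  have hderiv_ne (x : ℝ) : deriv ζ x ≠ 0 := by
    intro h0
    have h := hlevel x
    simp only [energy, h0] at h
    exact (hhetero _ (habove x) (hbelow x)).ne (by simpa using h)
  have hpos : ∀ x, 0 < deriv ζ x := by
    refine (hζ₂.continuous.forall_lt_or_forall_gt_of_forall_ne hderiv_ne).resolve_left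
      fun hneg => ?_
    have hanti := (strictAnti_of_deriv_neg hneg).antitone
    exact not_le.2 hlt ((hanti.le_of_tendsto htop 0).trans (hanti.ge_of_tendsto hbot 0))
  exact ⟨fun x => ⟨habove x, hbelow x, hpos x⟩, strictMono_of_deriv_pos hpos⟩

/-- **Monotonicity of heteroclinic fronts.** Under the conjugacy and nondegeneracy
conditions, every heteroclinic solution of `ζ″ + V′(ζ) = 0` from `Z₋` to `Z₊` stays
strictly between the rest points and is strictly increasing with `ζ′ > 0` everywhere. -/
theorem heteroclinic_monotone (V : ℝ → ℝ) (hV : ContDiff ℝ 2 V)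
    (Zm Zp : ℝ) (hlt : Zm < Zp)
    (hrest_m : deriv V Zm = 0) (hrest_p : deriv V Zp = 0)
    (hconj : V Zm = V Zp)
    (hhetero : ∀ z, Zm < z → z < Zp → V z < V Zm)
    (hspec_m : deriv (deriv V) Zm < 0) (hspec_p : deriv (deriv V) Zp < 0)
    (ζ : ℝ → ℝ) (hζ : ContDiff ℝ 2 ζ)
    (hode : ∀ x : ℝ, deriv (deriv ζ) x + deriv V (ζ x) = 0)
    (hbot : Tendsto ζ atBot (nhds Zm)) (htop : Tendsto ζ atTop (nhds Zp)) :
    (∀ x : ℝ, Zm < ζ x ∧ ζ x < Zp ∧ 0 < deriv ζ x) ∧ StrictMono ζ :=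
  heteroclinic_monotone_general V hV Zm Zp hlt hrest_m hrest_p hconj hhetero ζ hζ hode hbot htop
end

section
/- Let Z₊ be a rest point of V with V′(Z₊) = 0 and V″(Z₊) = −μ² < 0 for some μ > 0, and let ζ be a nonconstant solution of ζ″ + V′(ζ) = 0 with ζ(x) → Z₊ and ζ′(x) → 0 as x → +∞. Then ζ converges to Z₊ exponentially: for every ε ∈ (0, μ) there exists a constant C > 0 such that |ζ(x) − Z₊| + |ζ′(x)| ≤ C e^{−(μ−ε)x} for all x ≥ 0. -/
/-!
With `u = ζ − Z₊` and `v = ζ′`, conservation of the energy `v²/2 + V(ζ)` and its value at `+∞`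
give `v² = 2(V(Z₊) − V(ζ))`, which by the second-order Taylor expansion of `V` at `Z₊` equals
`μ²u²` up to `o(u²)`. Hence on a tail `x ≥ A` the orbit stays in the cone
`(μ − ε)²u² ≤ v² ≤ 2μ²u²`. There `(u²)′ = 2uv` vanishes only where `u = 0`, so `u²` has no
positive critical point; as `u² → 0`, an interior maximum argument shows that `u²` never
increases. So `uv ≤ 0`, which together with `|v| ≥ (μ − ε)|u|` gives `uv ≤ −(μ − ε)u²`.
Grönwall then gives `u² ≤ c e^{−2(μ − ε)x}`, the cone bounds `v` by `u`, and compactness of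
`[0, A]` takes care of the remaining interval.
-/

open Filter Topology Set Real Asymptotics

lemma isLittleO_sub_sub_sq_of_deriv_eq_zero {V : ℝ → ℝ} (hV : Differentiable ℝ V) {z₀ a : ℝ}
    (hcrit : deriv V z₀ = 0) (h2 : HasDerivAt (deriv V) a z₀) :
    (fun z => V z - V z₀ - a / 2 * (z - z₀) ^ 2) =o[𝓝 z₀] fun z => (z - z₀) ^ 2 := by
  have hg : ∀ z, HasDerivAt (fun z => V z - a / 2 * (z - z₀) ^ 2) (deriv V z - a * (z - z₀)) z :=
    fun z => ((hV z).hasDerivAt.sub ((((hasDerivAt_id' z).sub_const z₀).pow 2).const_mul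
      (a / 2))).congr_deriv (by ring)
  have hg' : (fun z => deriv V z - a * (z - z₀)) =o[𝓝[univ] z₀] fun z => (z - z₀) ^ 1 := by
    simpa [hcrit, mul_comm] using h2.isLittleO
  simpa [sub_right_comm] using
    convex_univ.isLittleO_pow_succ_real (mem_univ z₀) (fun z _ => (hg z).hasDerivWithinAt) hg'

section Energy

variable {V ζ : ℝ → ℝ} (hV : Differentiable ℝ V) (hζ : Differentiable ℝ ζ)
  (hζ' : Differentiable ℝ (deriv ζ)) (hode : ∀ x, deriv (deriv ζ) x + deriv V (ζ x) = 0)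
include hV hζ hζ' hode

lemma hasDerivAt_energy_s7 (x : ℝ) : HasDerivAt (fun t => deriv ζ t ^ 2 / 2 + V (ζ t)) 0 x :=
  ((((hζ' x).hasDerivAt.fun_pow 2).div_const 2).add
    ((hV (ζ x)).hasDerivAt.comp x (hζ x).hasDerivAt)).congr_deriv
    (by linear_combination deriv ζ x * hode x)

lemma sq_deriv_eq_of_tendsto {z₀ : ℝ} (htop : Tendsto ζ atTop (𝓝 z₀))
    (htop' : Tendsto (deriv ζ) atTop (𝓝 0)) (x : ℝ) :
    deriv ζ x ^ 2 = 2 * (V z₀ - V (ζ x)) := by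
  have hE := hasDerivAt_energy_s7 hV hζ hζ' hode
  have hconst : ∀ t, deriv ζ t ^ 2 / 2 + V (ζ t) = deriv ζ x ^ 2 / 2 + V (ζ x) := fun t =>
    is_const_of_deriv_eq_zero (fun t => (hE t).differentiableAt) (fun t => (hE t).deriv) t x
  have hlim : Tendsto (fun t => deriv ζ t ^ 2 / 2 + V (ζ t)) atTop (𝓝 ((0 : ℝ) ^ 2 / 2 + V z₀)) :=
    ((htop'.pow 2).div_const 2).add ((hV.continuous.tendsto z₀).comp htop)
  have := tendsto_nhds_unique (tendsto_const_nhds.congr fun t => (hconst t).symm) hlim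
  linarith

end Energy

lemma HasDerivAt.exists_gt_apply_gt_of_pos {f : ℝ → ℝ} {f' x : ℝ} (hf : HasDerivAt f f' x)
    (hpos : 0 < f') : ∃ b, x < b ∧ f x < f b := by
  obtain ⟨t, hslope, ht⟩ :=
    ((hf.tendsto_slope_zero_right.eventually (lt_mem_nhds hpos)).and self_mem_nhdsWithin).exists
  refine ⟨x + t, lt_add_of_pos_right x ht, ?_⟩
  rw [smul_eq_mul] at hslope
  have := (mul_pos_iff_of_pos_left (inv_pos.2 ht)).1 hslope
  linarith

lemma deriv_nonpos_of_tendsto_zero {f f' : ℝ → ℝ} {A : ℝ}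
    (hf : ∀ x, A ≤ x → HasDerivAt f (f' x) x) (hlim : Tendsto f atTop (𝓝 0))
    (hcrit : ∀ x, A ≤ x → f' x = 0 → f x ≤ 0) {x : ℝ} (hx : A ≤ x) (hfx : 0 < f x) :
    f' x ≤ 0 := by
  by_contra! hder
  obtain ⟨b, hxb, hfb⟩ := (hf x hx).exists_gt_apply_gt_of_pos hder
  obtain ⟨c, hfc, hbc⟩ :=
    ((hlim.eventually (gt_mem_nhds hfx)).and (eventually_gt_atTop b)).exists
  have hcont : ContinuousOn f (Icc x c) := fun y hy =>
    (hf y (hx.trans hy.1)).continuousAt.continuousWithinAt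
  obtain ⟨z, hz, hmax⟩ := isCompact_Icc.exists_isMaxOn_mem_subset (s := Ioo x c) hcont
      ⟨hxb.le, hbc.le⟩ fun y hy => by
    rw [Icc_sdiff_Ioo_same (hxb.trans hbc).le] at hy
    rcases hy with rfl | rfl <;> linarith
  have hfz : f b ≤ f z := hmax ⟨hxb.le, hbc.le⟩
  have hzA : A ≤ z := hx.trans hz.1.le
  have hcritz := (hmax.isLocalMax (Icc_mem_nhds hz.1 hz.2)).hasDerivAt_eq_zero (hf z hzA)
  linarith [hcrit z hzA hcritz]

lemma mul_le_neg_mul_sq_of_tendsto_zero {u v : ℝ → ℝ} {s A : ℝ} (hs : 0 < s)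
    (hu : ∀ x, A ≤ x → HasDerivAt u (v x) x) (hlim : Tendsto u atTop (𝓝 0))
    (hcone : ∀ x, A ≤ x → s ^ 2 * u x ^ 2 ≤ v x ^ 2) {x : ℝ} (hx : A ≤ x) :
    u x * v x ≤ -s * u x ^ 2 := by
  have hsq : ∀ y, A ≤ y → HasDerivAt (fun t => u t ^ 2) (2 * (u y * v y)) y := fun y hy => by
    simpa [mul_assoc] using (hu y hy).fun_pow 2
  have hcrit : ∀ y, A ≤ y → 2 * (u y * v y) = 0 → u y ^ 2 ≤ 0 := fun y hy h => by
    rcases mul_eq_zero.1 ((mul_eq_zero.1 h).resolve_left two_ne_zero) with h | h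
    · simp [h]
    · nlinarith [hcone y hy, pow_pos hs 2]
  have hsign : u x * v x ≤ 0 := by
    rcases eq_or_ne (u x) 0 with h | h
    · simp [h]
    · have := deriv_nonpos_of_tendsto_zero hsq (by simpa using hlim.pow 2) hcrit hx
        (by positivity)
      linarith
  have hmag : (s * u x ^ 2) ^ 2 ≤ (u x * v x) ^ 2 := by
    nlinarith [hcone x hx, sq_nonneg (u x)]
  have := sq_le_sq.1 hmag
  rw [abs_of_nonpos hsign, abs_of_nonneg (by positivity)] at this
  linarith

lemma le_mul_exp_of_hasDerivAt_le {f f' : ℝ → ℝ} {c A : ℝ}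
    (hf : ∀ x, A ≤ x → HasDerivAt f (f' x) x) (hle : ∀ x, A ≤ x → f' x ≤ c * f x)
    {x : ℝ} (hx : A ≤ x) : f x ≤ f A * exp (c * (x - A)) := by
  have hg : ∀ y, A ≤ y → HasDerivAt (fun t => f t * exp (-c * t))
      ((f' y - c * f y) * exp (-c * y)) y := fun y hy =>
    ((hf y hy).fun_mul ((hasDerivAt_id' y).const_mul (-c)).exp).congr_deriv (by ring)
  have hanti : AntitoneOn (fun t => f t * exp (-c * t)) (Ici A) := by
    refine antitoneOn_of_deriv_nonpos (convex_Ici A)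
      (fun y hy => (hg y hy).continuousAt.continuousWithinAt)
      (fun y hy => (hg y (interior_subset hy)).differentiableAt.differentiableWithinAt)
      fun y hy => ?_
    rw [interior_Ici] at hy
    rw [(hg y hy.le).deriv]
    exact mul_nonpos_of_nonpos_of_nonneg (by linarith [hle y hy.le]) (exp_pos _).le
  calc f x = f x * exp (-c * x) * exp (c * x) := by rw [mul_assoc, ← exp_add]; simp
    _ ≤ f A * exp (-c * A) * exp (c * x) :=
        mul_le_mul_of_nonneg_right (hanti self_mem_Ici hx hx) (exp_pos _).le
    _ = f A * exp (c * (x - A)) := by rw [mul_assoc, ← exp_add]; ring_nf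

lemma exists_abs_add_abs_le_exp_of_cone {u v : ℝ → ℝ} {s K A : ℝ} (hs : 0 < s) (hK : 0 ≤ K)
    (hu : ∀ x, A ≤ x → HasDerivAt u (v x) x) (hlim : Tendsto u atTop (𝓝 0))
    (hcone : ∀ x, A ≤ x → s ^ 2 * u x ^ 2 ≤ v x ^ 2 ∧ v x ^ 2 ≤ K * u x ^ 2) :
    ∃ C, ∀ x, A ≤ x → |u x| + |v x| ≤ C * exp (-s * x) := by
  have hdecay : ∀ x, A ≤ x → u x ^ 2 ≤ u A ^ 2 * exp (-2 * s * (x - A)) := by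
    refine fun x hx => le_mul_exp_of_hasDerivAt_le (fun y hy => (hu y hy).fun_pow 2)
      (fun y hy => ?_) hx
    have := mul_le_neg_mul_sq_of_tendsto_zero hs hu hlim (fun z hz => (hcone z hz).1) hy
    norm_num
    nlinarith
  set B := 2 * (1 + K) * u A ^ 2 * exp (2 * s * A)
  refine ⟨√B, fun x hx => ?_⟩
  rw [← sq_le_sq₀ (by positivity) (by positivity), mul_pow, sq_sqrt (by positivity)]
  calc (|u x| + |v x|) ^ 2 ≤ 2 * (u x ^ 2 + v x ^ 2) := by
        nlinarith [sq_abs (u x), sq_abs (v x), sq_nonneg (|u x| - |v x|)]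
    _ ≤ 2 * (1 + K) * u x ^ 2 := by nlinarith [(hcone x hx).2]
    _ ≤ 2 * (1 + K) * (u A ^ 2 * exp (-2 * s * (x - A))) := by gcongr; exact hdecay x hx
    _ = B * exp (-s * x) ^ 2 := by
        simp only [B, ← exp_nat_mul]
        rw [mul_assoc _ (exp (2 * s * A)), ← exp_add]
        ring_nf

lemma exists_pos_le_mul_exp_of_le_on_Ici {f : ℝ → ℝ} (hf : Continuous f) {s A C : ℝ}
    (htail : ∀ x, A ≤ x → f x ≤ C * exp (-s * x)) :
    ∃ C', 0 < C' ∧ ∀ x, 0 ≤ x → f x ≤ C' * exp (-s * x) := by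
  obtain ⟨M, hM⟩ := (isCompact_Icc (a := 0) (b := A)).bddAbove_image
    (hf.mul (continuous_const.mul continuous_id).rexp).continuousOn
  refine ⟨max (max C M) 1, by positivity, fun x hx => ?_⟩
  rcases le_total A x with hAx | hxA
  · exact (htail x hAx).trans (by gcongr; exact (le_max_left _ _).trans (le_max_left _ _))
  · have hMx : f x * exp (s * x) ≤ M := hM ⟨x, ⟨hx, hxA⟩, rfl⟩
    calc f x = f x * exp (s * x) * exp (-s * x) := by rw [mul_assoc, ← exp_add]; simp
      _ ≤ M * exp (-s * x) := by gcongr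
      _ ≤ _ := by gcongr; exact (le_max_right _ _).trans (le_max_left _ _)

theorem exponential_decay_at_rest_point_general (V : ℝ → ℝ) (hV : ContDiff ℝ 2 V)
    (Zp μ : ℝ)
    (hrest : deriv V Zp = 0) (hspec : deriv (deriv V) Zp = -μ^2)
    (ζ : ℝ → ℝ) (hζ : ContDiff ℝ 2 ζ)
    (hode : ∀ x : ℝ, deriv (deriv ζ) x + deriv V (ζ x) = 0)
    (htop : Tendsto ζ atTop (nhds Zp))
    (htop' : Tendsto (deriv ζ) atTop (nhds 0)) :
    ∀ ε : ℝ, 0 < ε → ε < μ → ∃ C : ℝ, 0 < C ∧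
      ∀ x : ℝ, 0 ≤ x → |ζ x - Zp| + |deriv ζ x| ≤ C * Real.exp (-(μ - ε) * x) := by
  intro ε hε hεμ
  have hs : 0 < μ - ε := sub_pos.2 hεμ
  have hζd : Differentiable ℝ ζ := hζ.differentiable (by norm_num)
  have hVd : Differentiable ℝ V := hV.differentiable (by norm_num)
  have henergy := sq_deriv_eq_of_tendsto hVd hζd hζ.differentiable_deriv_two hode htop htop'
  have htaylor := isLittleO_sub_sub_sq_of_deriv_eq_zero hVd hrest
    (hspec ▸ (hV.differentiable_deriv_two Zp).hasDerivAt)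
  have hgap : 0 < (μ ^ 2 - (μ - ε) ^ 2) / 2 := by nlinarith
  obtain ⟨A, hA⟩ := eventually_atTop.1 (htop.eventually (htaylor.def hgap))
  have hcone : ∀ x, A ≤ x → (μ - ε) ^ 2 * (ζ x - Zp) ^ 2 ≤ deriv ζ x ^ 2 ∧
      deriv ζ x ^ 2 ≤ 2 * μ ^ 2 * (ζ x - Zp) ^ 2 := fun x hx => by
    have hx := hA x hx
    rw [norm_eq_abs, norm_eq_abs, abs_of_nonneg (sq_nonneg (ζ x - Zp)), abs_le] at hx
    constructor <;> nlinarith [henergy x, sq_nonneg (ζ x - Zp), sq_nonneg (μ - ε)]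
  obtain ⟨C, hC⟩ := exists_abs_add_abs_le_exp_of_cone hs (by positivity)
    (fun x _ => (hζd x).hasDerivAt.sub_const Zp) (tendsto_sub_nhds_zero_iff.2 htop) hcone
  exact exists_pos_le_mul_exp_of_le_on_Ici
    ((hζd.continuous.sub continuous_const).abs.add (hζ.continuous_deriv (by norm_num)).abs) hC

/-- **Exponential decay at a nondegenerate rest point.** If `V′(Z₊) = 0` and
`V″(Z₊) = -μ² < 0`, then a nonconstant solution of `ζ″ + V′(ζ) = 0` converging to
`Z₊` (with `ζ′ → 0`) as `x → +∞` converges exponentially: for every `ε ∈ (0, μ)`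
there is `C > 0` with `|ζ(x) − Z₊| + |ζ′(x)| ≤ C e^{−(μ−ε)x}` for all `x ≥ 0`. -/
theorem exponential_decay_at_rest_point (V : ℝ → ℝ) (hV : ContDiff ℝ 2 V)
    (Zp μ : ℝ) (hμ : 0 < μ)
    (hrest : deriv V Zp = 0) (hspec : deriv (deriv V) Zp = -μ^2)
    (ζ : ℝ → ℝ) (hζ : ContDiff ℝ 2 ζ)
    (hode : ∀ x : ℝ, deriv (deriv ζ) x + deriv V (ζ x) = 0)
    (hnonconst : ∃ x y, ζ x ≠ ζ y)
    (htop : Tendsto ζ atTop (nhds Zp))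
    (htop' : Tendsto (deriv ζ) atTop (nhds 0)) :
    ∀ ε : ℝ, 0 < ε → ε < μ → ∃ C : ℝ, 0 < C ∧
      ∀ x : ℝ, 0 ≤ x → |ζ x - Zp| + |deriv ζ x| ≤ C * Real.exp (-(μ - ε) * x) :=
  exponential_decay_at_rest_point_general V hV Zp μ hrest hspec ζ hζ hode htop htop'
end

section
/- Let a < b and let G : [a,b] → ℝ be continuous with G(a) = G(b) = 0, G(z) > 0 for all z ∈ (a,b), and suppose there exist K > 0 and δ > 0 such that G(z) ≤ K(z−a)² for z ∈ [a, a+δ] and G(z) ≤ K(b−z)² for z ∈ [b−δ, b]. Then there exists a strictly increasing C¹ function ζ : ℝ → (a,b) satisfying ζ′(x) = √(G(ζ(x))) for all x ∈ ℝ, with ζ(x) → a as x → −∞ and ζ(x) → b as x → +∞. -/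
open Filter

/-- **Separation-of-variables lemma.** If `G` is continuous on `[a,b]`, vanishes at
the endpoints, is positive on `(a,b)`, and is dominated by a quadratic near each
endpoint, then the ODE `ζ′ = √(G(ζ))` has a strictly increasing `C¹` solution on ℝ
with values in `(a,b)` connecting `a` (at `−∞`) to `b` (at `+∞`). -/
theorem separation_of_variables_front (a b : ℝ) (hab : a < b)
    (G : ℝ → ℝ) (hG : ContinuousOn G (Set.Icc a b))
    (hGa : G a = 0) (hGb : G b = 0)
    (hGpos : ∀ z ∈ Set.Ioo a b, 0 < G z)
    (K δ : ℝ) (hK : 0 < K) (hδ : 0 < δ)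
    (hquad_a : ∀ z ∈ Set.Icc a (a + δ), G z ≤ K * (z - a)^2)
    (hquad_b : ∀ z ∈ Set.Icc (b - δ) b, G z ≤ K * (b - z)^2) :
    ∃ ζ : ℝ → ℝ, StrictMono ζ ∧ ContDiff ℝ 1 ζ ∧
      (∀ x : ℝ, ζ x ∈ Set.Ioo a b) ∧
      (∀ x : ℝ, deriv ζ x = Real.sqrt (G (ζ x))) ∧
      Tendsto ζ atBot (nhds a) ∧ Tendsto ζ atTop (nhds b) := by
  classical
  set m : ℝ := (a + b) / 2 with hm
  have ham : a < m := by rw [hm]; linarith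
  have hmb : m < b := by rw [hm]; linarith
  set c : ℝ := Real.sqrt K with hc
  have hcpos : 0 < c := Real.sqrt_pos.mpr hK
  set f : ℝ → ℝ := fun t => (Real.sqrt (G t))⁻¹ with hfdef
  have hGc : ∀ z ∈ Set.Ioo a b, ContinuousAt G z := fun z hz =>
    hG.continuousAt (Icc_mem_nhds hz.1 hz.2)
  have hsqrtpos : ∀ z ∈ Set.Ioo a b, 0 < Real.sqrt (G z) := fun z hz =>
    Real.sqrt_pos.mpr (hGpos z hz)
  have hfpos : ∀ z ∈ Set.Ioo a b, 0 < f z := fun z hz =>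
    inv_pos.mpr (hsqrtpos z hz)
  have hfc : ∀ z ∈ Set.Ioo a b, ContinuousAt f z := by
    intro z hz
    exact (Real.continuous_sqrt.continuousAt.comp (hGc z hz)).inv₀
      (ne_of_gt (hsqrtpos z hz))
  have hfcOn : ContinuousOn f (Set.Ioo a b) := fun z hz =>
    (hfc z hz).continuousWithinAt
  have hfnonneg : ∀ t, 0 ≤ f t := fun t => inv_nonneg.mpr (Real.sqrt_nonneg _)
  have hint : ∀ z₁ ∈ Set.Ioo a b, ∀ z₂ ∈ Set.Ioo a b,
      IntervalIntegrable f MeasureTheory.volume z₁ z₂ := by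
    intro z₁ h₁ z₂ h₂
    exact (hfcOn.mono (Set.ordConnected_Ioo.uIcc_subset h₁ h₂)).intervalIntegrable
  set F : ℝ → ℝ := fun z => ∫ t in m..z, f t with hFdef
  have hmmem : m ∈ Set.Ioo a b := ⟨ham, hmb⟩
  have hFd : ∀ z ∈ Set.Ioo a b, HasDerivAt F (f z) z := by
    intro z hz
    exact intervalIntegral.integral_hasDerivAt_right (hint m hmmem z hz)
      (hfcOn.stronglyMeasurableAtFilter isOpen_Ioo z hz) (hfc z hz)
  have hFcOn : ContinuousOn F (Set.Ioo a b) := fun z hz =>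
    ((hFd z hz).continuousAt).continuousWithinAt
  have hFmono : StrictMonoOn F (Set.Ioo a b) := by
    apply strictMonoOn_of_deriv_pos (convex_Ioo a b) hFcOn
    intro z hz
    rw [interior_Ioo] at hz
    rw [(hFd z hz).deriv]
    exact hfpos z hz
  -- lower estimate near a
  have hleft : ∀ y : ℝ, ∃ z ∈ Set.Ioo a m, F z ≤ y := by
    intro y
    set δ₁ : ℝ := min δ (m - a) with hδ₁
    have hδ₁pos : 0 < δ₁ := lt_min hδ (by linarith)
    set m₁ : ℝ := a + δ₁ with hm₁
    have hm₁a : a < m₁ := by rw [hm₁]; linarith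
    have hm₁m : m₁ ≤ m := by
      have := min_le_right δ (m - a); rw [hm₁]; linarith
    have hm₁δ : m₁ ≤ a + δ := by
      have := min_le_left δ (m - a); rw [hm₁]; linarith
    have hm₁b : m₁ < b := lt_of_le_of_lt hm₁m hmb
    set r : ℝ := min (δ₁ / 2) (Real.exp (c * y + Real.log δ₁)) with hr
    have hrpos : 0 < r := lt_min (by linarith) (Real.exp_pos _)
    have hrδ₁ : r < δ₁ := lt_of_le_of_lt (min_le_left _ _) (by linarith)
    set z : ℝ := a + r with hz
    have hzmem : z ∈ Set.Ioo a m := ⟨by rw [hz]; linarith, by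
      rw [hz]; have : a + r < m₁ := by rw [hm₁]; linarith
      linarith [hm₁m]⟩
    have hzmem' : z ∈ Set.Ioo a b := ⟨hzmem.1, lt_trans hzmem.2 hmb⟩
    have hzm₁ : z ≤ m₁ := by rw [hz, hm₁]; linarith
    have hm₁mem : m₁ ∈ Set.Ioo a b := ⟨hm₁a, hm₁b⟩
    refine ⟨z, hzmem, ?_⟩
    set φ : ℝ → ℝ := fun t => (c * (t - a))⁻¹ with hφ
    have hφint : IntervalIntegrable φ MeasureTheory.volume z m₁ := by
      apply ContinuousOn.intervalIntegrable
      apply ContinuousOn.inv₀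
      · exact (continuous_const.mul (continuous_id.sub continuous_const)).continuousOn
      · intro t ht
        rw [Set.uIcc_of_le hzm₁] at ht
        have h1 : a < t := lt_of_lt_of_le hzmem.1 ht.1
        exact mul_ne_zero (ne_of_gt hcpos) (by linarith)
    have hcomp : ∀ t ∈ Set.Icc z m₁, φ t ≤ f t := by
      intro t ht
      have hta : a < t := lt_of_lt_of_le hzmem.1 ht.1
      have htb : t < b := lt_of_le_of_lt ht.2 hm₁b
      have htδ : t ≤ a + δ := le_trans ht.2 hm₁δ
      have hGt : G t ≤ K * (t - a) ^ 2 := hquad_a t ⟨hta.le, htδ⟩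
      have hsq : Real.sqrt (G t) ≤ c * (t - a) := by
        calc Real.sqrt (G t) ≤ Real.sqrt (K * (t - a) ^ 2) := Real.sqrt_le_sqrt hGt
          _ = c * (t - a) := by
            rw [Real.sqrt_mul hK.le, Real.sqrt_sq (by linarith : (0:ℝ) ≤ t - a)]
      have h0 : 0 < Real.sqrt (G t) := hsqrtpos t ⟨hta, htb⟩
      rw [hφ, hfdef]
      exact inv_anti₀ h0 hsq
    have hmono_int : (∫ t in z..m₁, φ t) ≤ ∫ t in z..m₁, f t :=
      intervalIntegral.integral_mono_on hzm₁ hφint (hint z hzmem' m₁ hm₁mem) hcomp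
    have hcalc : (∫ t in z..m₁, φ t) = c⁻¹ * (Real.log δ₁ - Real.log r) := by
      have h1 : (∫ t in z..m₁, φ t) = c⁻¹ * ∫ t in z..m₁, (t - a)⁻¹ := by
        rw [← intervalIntegral.integral_const_mul]
        apply intervalIntegral.integral_congr
        intro t _
        simp [hφ, mul_inv, mul_comm]
      have h2 : (∫ t in z..m₁, (t - a)⁻¹) = ∫ u in r..δ₁, u⁻¹ := by
        have h := intervalIntegral.integral_comp_sub_right (a := z) (b := m₁)
          (fun u => u⁻¹) a
        have e1 : z - a = r := by rw [hz]; ring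
        have e2 : m₁ - a = δ₁ := by rw [hm₁]; ring
        rw [h, e1, e2]
      have h3 : (∫ u in r..δ₁, u⁻¹) = Real.log δ₁ - Real.log r := by
        have h0 : (0:ℝ) ∉ Set.uIcc r δ₁ := by
          rw [Set.uIcc_of_le hrδ₁.le]
          intro h; exact absurd h.1 (not_le.mpr hrpos)
        have := integral_one_div h0
        simp only [one_div] at this
        rw [this, Real.log_div (ne_of_gt hδ₁pos) (ne_of_gt hrpos)]
      rw [h1, h2, h3]
    have hsplit : F z = -((∫ t in z..m₁, f t) + ∫ t in m₁..m, f t) := by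
      rw [hFdef]
      have : (∫ t in z..m₁, f t) + ∫ t in m₁..m, f t = ∫ t in z..m, f t :=
        intervalIntegral.integral_add_adjacent_intervals
          (hint z hzmem' m₁ hm₁mem) (hint m₁ hm₁mem m hmmem)
      rw [this, ← intervalIntegral.integral_symm]
    have htail : 0 ≤ ∫ t in m₁..m, f t :=
      intervalIntegral.integral_nonneg hm₁m (fun u _ => hfnonneg u)
    have hlogr : Real.log r ≤ c * y + Real.log δ₁ := by
      rw [Real.log_le_iff_le_exp hrpos]
      exact min_le_right _ _
    have hkey : -y ≤ c⁻¹ * (Real.log δ₁ - Real.log r) := by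
      have h7 : c * (-y) ≤ Real.log δ₁ - Real.log r := by linarith
      have h8 := mul_le_mul_of_nonneg_left h7 (inv_nonneg.mpr hcpos.le)
      rw [← mul_assoc, inv_mul_cancel₀ (ne_of_gt hcpos), one_mul] at h8
      exact h8
    rw [hsplit]
    have : -y ≤ ∫ t in z..m₁, f t := le_trans hkey (hcalc ▸ hmono_int)
    linarith
  -- upper estimate near b
  have hright : ∀ y : ℝ, ∃ z ∈ Set.Ioo m b, y ≤ F z := by
    intro y
    set δ₂ : ℝ := min δ (b - m) with hδ₂
    have hδ₂pos : 0 < δ₂ := lt_min hδ (by linarith)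
    set m₂ : ℝ := b - δ₂ with hm₂
    have hm₂b : m₂ < b := by rw [hm₂]; linarith
    have hm₂m : m ≤ m₂ := by
      have := min_le_right δ (b - m); rw [hm₂]; linarith
    have hm₂δ : b - δ ≤ m₂ := by
      have := min_le_left δ (b - m); rw [hm₂]; linarith
    have hm₂a : a < m₂ := lt_of_lt_of_le ham hm₂m
    set r : ℝ := min (δ₂ / 2) (Real.exp (Real.log δ₂ - c * y)) with hr
    have hrpos : 0 < r := lt_min (by linarith) (Real.exp_pos _)
    have hrδ₂ : r < δ₂ := lt_of_le_of_lt (min_le_left _ _) (by linarith)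
    set z : ℝ := b - r with hz
    have hzmem : z ∈ Set.Ioo m b := ⟨by
      rw [hz]; have : m₂ < b - r := by rw [hm₂]; linarith
      linarith [hm₂m], by rw [hz]; linarith⟩
    have hzmem' : z ∈ Set.Ioo a b := ⟨lt_trans ham hzmem.1, hzmem.2⟩
    have hm₂z : m₂ ≤ z := by rw [hz, hm₂]; linarith
    have hm₂mem : m₂ ∈ Set.Ioo a b := ⟨hm₂a, hm₂b⟩
    refine ⟨z, hzmem, ?_⟩
    set φ : ℝ → ℝ := fun t => (c * (b - t))⁻¹ with hφ
    have hφint : IntervalIntegrable φ MeasureTheory.volume m₂ z := by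
      apply ContinuousOn.intervalIntegrable
      apply ContinuousOn.inv₀
      · exact (continuous_const.mul (continuous_const.sub continuous_id)).continuousOn
      · intro t ht
        rw [Set.uIcc_of_le hm₂z] at ht
        have h1 : t < b := lt_of_le_of_lt ht.2 hzmem.2
        exact mul_ne_zero (ne_of_gt hcpos) (by linarith)
    have hcomp : ∀ t ∈ Set.Icc m₂ z, φ t ≤ f t := by
      intro t ht
      have hta : a < t := lt_of_lt_of_le hm₂a ht.1
      have htb : t < b := lt_of_le_of_lt ht.2 hzmem.2
      have htδ : b - δ ≤ t := le_trans hm₂δ ht.1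
      have hGt : G t ≤ K * (b - t) ^ 2 := hquad_b t ⟨htδ, htb.le⟩
      have hsq : Real.sqrt (G t) ≤ c * (b - t) := by
        calc Real.sqrt (G t) ≤ Real.sqrt (K * (b - t) ^ 2) := Real.sqrt_le_sqrt hGt
          _ = c * (b - t) := by
            rw [Real.sqrt_mul hK.le, Real.sqrt_sq (by linarith : (0:ℝ) ≤ b - t)]
      have h0 : 0 < Real.sqrt (G t) := hsqrtpos t ⟨hta, htb⟩
      rw [hφ, hfdef]
      exact inv_anti₀ h0 hsq
    have hmono_int : (∫ t in m₂..z, φ t) ≤ ∫ t in m₂..z, f t :=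
      intervalIntegral.integral_mono_on hm₂z hφint (hint m₂ hm₂mem z hzmem') hcomp
    have hcalc : (∫ t in m₂..z, φ t) = c⁻¹ * (Real.log δ₂ - Real.log r) := by
      have h1 : (∫ t in m₂..z, φ t) = c⁻¹ * ∫ t in m₂..z, (b - t)⁻¹ := by
        rw [← intervalIntegral.integral_const_mul]
        apply intervalIntegral.integral_congr
        intro t _
        simp [hφ, mul_inv, mul_comm]
      have h2 : (∫ t in m₂..z, (b - t)⁻¹) = ∫ u in r..δ₂, u⁻¹ := by
        have h := intervalIntegral.integral_comp_sub_left (a := m₂) (b := z)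
          (fun u => u⁻¹) b
        have e1 : b - z = r := by rw [hz]; ring
        have e2 : b - m₂ = δ₂ := by rw [hm₂]; ring
        rw [h, e1, e2]
      have h3 : (∫ u in r..δ₂, u⁻¹) = Real.log δ₂ - Real.log r := by
        have h0 : (0:ℝ) ∉ Set.uIcc r δ₂ := by
          rw [Set.uIcc_of_le hrδ₂.le]
          intro h; exact absurd h.1 (not_le.mpr hrpos)
        have := integral_one_div h0
        simp only [one_div] at this
        rw [this, Real.log_div (ne_of_gt hδ₂pos) (ne_of_gt hrpos)]
      rw [h1, h2, h3]
    have hsplit : F z = (∫ t in m..m₂, f t) + ∫ t in m₂..z, f t := by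
      rw [hFdef]
      exact (intervalIntegral.integral_add_adjacent_intervals
        (hint m hmmem m₂ hm₂mem) (hint m₂ hm₂mem z hzmem')).symm
    have htail : 0 ≤ ∫ t in m..m₂, f t :=
      intervalIntegral.integral_nonneg hm₂m (fun u _ => hfnonneg u)
    have hlogr : Real.log r ≤ Real.log δ₂ - c * y := by
      rw [Real.log_le_iff_le_exp hrpos]
      exact min_le_right _ _
    have hkey : y ≤ c⁻¹ * (Real.log δ₂ - Real.log r) := by
      have h7 : c * y ≤ Real.log δ₂ - Real.log r := by linarith
      have h8 := mul_le_mul_of_nonneg_left h7 (inv_nonneg.mpr hcpos.le)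
      rw [← mul_assoc, inv_mul_cancel₀ (ne_of_gt hcpos), one_mul] at h8
      exact h8
    rw [hsplit]
    have : y ≤ ∫ t in m₂..z, f t := le_trans hkey (hcalc ▸ hmono_int)
    linarith
  -- surjectivity of F onto ℝ
  have hsurj : ∀ y : ℝ, ∃ z ∈ Set.Ioo a b, F z = y := by
    intro y
    obtain ⟨z₁, hz₁, hz₁y⟩ := hleft y
    obtain ⟨z₂, hz₂, hz₂y⟩ := hright y
    have hz₁₂ : z₁ ≤ z₂ := le_of_lt (lt_trans hz₁.2 hz₂.1)
    have hsub : Set.Icc z₁ z₂ ⊆ Set.Ioo a b := fun t ht =>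
      ⟨lt_of_lt_of_le hz₁.1 ht.1, lt_of_le_of_lt ht.2 hz₂.2⟩
    have := intermediate_value_Icc hz₁₂ (hFcOn.mono hsub)
    obtain ⟨x, hx, hxy⟩ := this ⟨hz₁y, hz₂y⟩
    exact ⟨x, hsub hx, hxy⟩
  -- build the inverse via an order isomorphism
  set S := Set.Ioo a b with hS
  set Ft : S → ℝ := fun z => F z with hFt
  have hFt_mono : StrictMono Ft := fun u v huv =>
    hFmono u.2 v.2 (Subtype.coe_lt_coe.mpr huv)
  have hFt_surj : Function.Surjective Ft := by
    intro y
    obtain ⟨x, hx, hxy⟩ := hsurj y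
    exact ⟨⟨x, hx⟩, hxy⟩
  set e := StrictMono.orderIsoOfSurjective Ft hFt_mono hFt_surj with he
  set ζ : ℝ → ℝ := fun x => ((e.symm x : S) : ℝ) with hζ
  have hmem : ∀ x, ζ x ∈ Set.Ioo a b := fun x => (e.symm x).2
  have hFζ : ∀ x, F (ζ x) = x := fun x =>
    StrictMono.orderIsoOfSurjective_self_symm_apply Ft hFt_mono hFt_surj x
  have hζF : ∀ z : S, ζ (Ft z) = z := by
    intro z
    rw [hζ]
    simp only
    rw [StrictMono.orderIsoOfSurjective_symm_apply_self Ft hFt_mono hFt_surj z]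
  have hζmono : StrictMono ζ := fun x y hxy =>
    Subtype.coe_lt_coe.mpr (e.symm.strictMono hxy)
  have hζcont : Continuous ζ :=
    continuous_subtype_val.comp (OrderIso.continuous e.symm)
  have hζd : ∀ x, HasDerivAt ζ (Real.sqrt (G (ζ x))) x := by
    intro x
    have hz := hmem x
    have hfd := hFd (ζ x) hz
    have hne : f (ζ x) ≠ 0 := ne_of_gt (hfpos _ hz)
    have := hfd.of_local_left_inverse hζcont.continuousAt hne
      (Filter.Eventually.of_forall hFζ)
    simpa [hfdef, inv_inv] using this
  refine ⟨ζ, hζmono, ?_, hmem, fun x => (hζd x).deriv, ?_, ?_⟩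
  · rw [contDiff_one_iff_deriv]
    constructor
    · exact fun x => (hζd x).differentiableAt
    · have hder : deriv ζ = fun x => Real.sqrt (G (ζ x)) :=
        funext fun x => (hζd x).deriv
      rw [hder]
      rw [continuous_iff_continuousAt]
      intro x
      exact (Real.continuous_sqrt.continuousAt.comp
        (hGc (ζ x) (hmem x))).comp hζcont.continuousAt
  · have hrange : Set.range ζ = Set.Ioo a b := by
      apply Set.Subset.antisymm
      · rintro _ ⟨x, rfl⟩; exact hmem x
      · intro z hz
        exact ⟨F z, by have := hζF ⟨z, hz⟩; simpa [hFt] using this⟩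
    have hbdd : BddBelow (Set.range ζ) := by
      rw [hrange]; exact ⟨a, fun t ht => ht.1.le⟩
    have h := tendsto_atBot_ciInf hζmono.monotone hbdd
    have : (⨅ x, ζ x) = a := by
      rw [iInf, hrange, csInf_Ioo hab]
    rwa [this] at h
  · have hrange : Set.range ζ = Set.Ioo a b := by
      apply Set.Subset.antisymm
      · rintro _ ⟨x, rfl⟩; exact hmem x
      · intro z hz
        exact ⟨F z, by have := hζF ⟨z, hz⟩; simpa [hFt] using this⟩
    have hbdd : BddAbove (Set.range ζ) := by
      rw [hrange]; exact ⟨b, fun t ht => ht.2.le⟩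
    have h := tendsto_atTop_ciSup hζmono.monotone hbdd
    have : (⨆ x, ζ x) = b := by
      rw [iSup, hrange, csSup_Ioo hab]
    rwa [this] at h
end

section
/- Let V : ℝ × ℝ → ℝ be twice continuously differentiable, write V_z, V_zz for partial derivatives in the first argument, and let δ > 0. Suppose Z₋, Z₊ : (λ₀−δ, λ₀+δ) → ℝ are continuous functions such that for every λ in this interval: Z₋(λ) < Z₊(λ), V_z(Z₋(λ), λ) = V_z(Z₊(λ), λ) = 0, V(Z₋(λ), λ) = V(Z₊(λ), λ), V(z, λ) < V(Z₋(λ), λ) for all z ∈ (Z₋(λ), Z₊(λ)), and V_zz(Z₋(λ), λ) < 0, V_zz(Z₊(λ), λ) < 0. Then for each λ ∈ (λ₀−δ, λ₀+δ) there is a strictly increasing solution ζ(λ) : ℝ → ℝ of ζ″ + V_z(ζ, λ) = 0 with ζ(λ)(x) → Z∓(λ) as x → ∓∞, normalized by ζ(λ)(0) = (Z₋(λ)+Z₊(λ))/2, and the map (λ, x) ↦ ζ(λ)(x) is continuous. Thus the heteroclinic fronts form a continuous local curve in the parameter λ. -/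
/-!
Along a front of `ζ″ + W′(ζ) = 0` joining the critical points `a < b` of `W = V(·, λ)`, energy
conservation gives `ζ′ = √(2 (W a - W ζ))`. Hence the front is the inverse of the travel time
`T z = ∫ ds / √(2 (W a - W s))`, taken from the midpoint of `(a, b)` to `z`. `T` is strictly
increasing on `(a, b)`, and it diverges logarithmically at both ends, because
`W a - W s = O((s - p)²)` at each critical point `p ∈ {a, b}` and `W a = W b`. So `T` maps `(a, b)`
onto `ℝ`.

For the dependence on `λ`: when `z` is fixed, the integrand of `T` stays bounded for nearby `λ`, so
dominated convergence makes `T z` continuous in `λ`. Inverting a family of strictly increasing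
functions that depends continuously on a parameter yields a jointly continuous family.
-/

open Filter Set

/-- Partial derivative of `V : ℝ × ℝ → ℝ` in its first argument. -/
noncomputable def Vz (V : ℝ × ℝ → ℝ) (z lam : ℝ) : ℝ := fderiv ℝ V (z, lam) (1, 0)

/-- Second partial derivative of `V : ℝ × ℝ → ℝ` in its first argument. -/
noncomputable def Vzz (V : ℝ × ℝ → ℝ) (z lam : ℝ) : ℝ :=
  fderiv ℝ (fun p : ℝ × ℝ => fderiv ℝ V p (1, 0)) (z, lam) (1, 0)

open Topology Asymptotics MeasureTheory

theorem isBigO_sub_sq_of_deriv_eq_zero {f : ℝ → ℝ} {a : ℝ} (hf : ContDiff ℝ 2 f)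
    (hfa : deriv f a = 0) : (fun x => f x - f a) =O[𝓝 a] fun x => (x - a) ^ 2 := by
  have h := (taylor_isLittleO_univ (x₀ := a) hf).isBigO.add
    ((isBigO_refl (fun x => (x - a) ^ 2) _).const_mul_left (iteratedDeriv 2 f a / 2))
  refine h.congr_left fun x => ?_
  simp only [taylorWithinEval_succ, taylor_within_zero_eval, iteratedDerivWithin_univ,
    Nat.reduceAdd, iteratedDeriv_one, hfa, Nat.factorial, smul_eq_mul]
  ring

theorem inv_mul_inv_le_inv_sqrt {g K d : ℝ} (hg : 0 < g) (hd : 0 < d) (hgK : g ≤ K * d ^ 2) :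
    (√K)⁻¹ * d⁻¹ ≤ (√g)⁻¹ := by
  rw [← mul_inv]
  refine inv_anti₀ (Real.sqrt_pos.2 hg) ?_
  calc √g ≤ √(K * d ^ 2) := Real.sqrt_le_sqrt hgK
    _ = √K * d := by rw [Real.sqrt_mul' _ (by positivity), Real.sqrt_sq hd.le]

theorem exists_inv_abs_le_inv_sqrt_of_deriv_eq_zero {W : ℝ → ℝ} {p : ℝ} (hW : ContDiff ℝ 2 W)
    (hp : deriv W p = 0) :
    ∃ c > 0, ∀ᶠ s in 𝓝 p, W s < W p → c * |s - p|⁻¹ ≤ (√(2 * (W p - W s)))⁻¹ := by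
  obtain ⟨K, hK, hbound⟩ := (isBigO_sub_sq_of_deriv_eq_zero hW hp).exists_pos
  refine ⟨(√(2 * K))⁻¹, by positivity, ?_⟩
  filter_upwards [hbound.bound] with s hs hWs
  have hsp : s ≠ p := by rintro rfl; exact lt_irrefl _ hWs
  refine inv_mul_inv_le_inv_sqrt (by linarith) (abs_pos.2 (sub_ne_zero.2 hsp)) ?_
  rw [Real.norm_eq_abs, Real.norm_eq_abs, abs_sub_comm, abs_of_pos (by linarith), abs_pow] at hs
  linarith

theorem tendsto_log_sub_nhdsGT (a : ℝ) :
    Tendsto (fun z => Real.log (z - a)) (𝓝[>] a) atBot := by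
  refine Real.tendsto_log_nhdsGT_zero.comp ?_
  have := (continuous_sub_right a).continuousWithinAt.tendsto_nhdsWithin
    (s := Ioi a) (t := Ioi 0) (x := a) fun z hz => sub_pos.2 hz
  rwa [sub_self] at this

theorem mul_log_sub_log_le_integral_of_inv_sub_le {f : ℝ → ℝ} {a z n c : ℝ} (haz : a < z)
    (hzn : z ≤ n) (hf : IntervalIntegrable f volume z n)
    (hfa : ∀ s ∈ Ioc a n, c * (s - a)⁻¹ ≤ f s) :
    c * (Real.log (n - a) - Real.log (z - a)) ≤ ∫ s in z..n, f s := by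
  have hinv : ∫ s in z..n, c * (s - a)⁻¹ = c * (Real.log (n - a) - Real.log (z - a)) := by
    rw [intervalIntegral.integral_const_mul, intervalIntegral.integral_comp_sub_right (·⁻¹),
      integral_inv_of_pos (sub_pos.2 haz) (by linarith), Real.log_div (by linarith) (by linarith)]
  rw [← hinv]
  refine intervalIntegral.integral_mono_on hzn ?_ hf fun s hs => hfa s ⟨haz.trans_le hs.1, hs.2⟩
  refine (ContinuousOn.intervalIntegrable ?_)
  refine continuousOn_const.mul (ContinuousOn.inv₀ (by fun_prop) fun s hs => ?_)
  rw [uIcc_of_le hzn] at hs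
  exact (sub_pos.2 (haz.trans_le hs.1)).ne'

theorem tendsto_intervalIntegral_atBot_of_inv_sub_le {f : ℝ → ℝ} {a m c : ℝ} (ham : a < m)
    (hc : 0 < c) (hf : ContinuousOn f (Ioc a m)) (hfa : ∀ᶠ s in 𝓝[>] a, c * (s - a)⁻¹ ≤ f s) :
    Tendsto (fun z => ∫ s in m..z, f s) (𝓝[>] a) atBot := by
  obtain ⟨u, hau, hu⟩ := mem_nhdsGT_iff_exists_Ioc_subset.1 hfa
  set n := min m u
  have han : a < n := lt_min ham hau
  have hint : ∀ x ∈ Ioc a m, ∀ y ∈ Ioc a m, IntervalIntegrable f volume x y :=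
    fun x hx y hy => (hf.mono (ordConnected_Ioc.uIcc_subset hx hy)).intervalIntegrable
  have hn : n ∈ Ioc a m := ⟨han, min_le_left _ _⟩
  have hle : ∀ z ∈ Ioo a n, ∫ s in m..z, f s ≤
      (∫ s in m..n, f s) - c * Real.log (n - a) + c * Real.log (z - a) := by
    intro z hz
    have hzm : z ∈ Ioc a m := ⟨hz.1, hz.2.le.trans hn.2⟩
    have hlog := mul_log_sub_log_le_integral_of_inv_sub_le hz.1 hz.2.le (hint z hzm n hn)
      fun s hs => hu ⟨hs.1, hs.2.trans (min_le_right _ _)⟩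
    rw [← intervalIntegral.integral_add_adjacent_intervals (hint m ⟨ham, le_rfl⟩ n hn)
      (hint n hn z hzm), intervalIntegral.integral_symm z n]
    linarith
  refine tendsto_atBot_mono' _ (eventually_of_mem (Ioo_mem_nhdsGT han) hle) ?_
  exact tendsto_atBot_add_const_left _ _ ((tendsto_log_sub_nhdsGT a).const_mul_atBot hc)

theorem tendsto_intervalIntegral_atTop_of_inv_sub_le {f : ℝ → ℝ} {m b c : ℝ} (hmb : m < b)
    (hc : 0 < c) (hf : ContinuousOn f (Ico m b)) (hfb : ∀ᶠ s in 𝓝[<] b, c * (b - s)⁻¹ ≤ f s) :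
    Tendsto (fun z => ∫ s in m..z, f s) (𝓝[<] b) atTop := by
  have hreflect := tendsto_intervalIntegral_atBot_of_inv_sub_le (f := fun s => f (-s))
    (neg_lt_neg hmb) hc
    (hf.comp continuousOn_neg fun s hs => ⟨le_neg_of_le_neg hs.2, neg_lt.1 hs.1⟩)
    ((tendsto_neg_nhdsGT_neg.eventually hfb).mono fun s hs => by simpa [add_comm] using hs)
  refine (tendsto_neg_atBot_atTop.comp (hreflect.comp tendsto_neg_nhdsLT)).congr fun z => ?_
  simp [intervalIntegral.integral_comp_neg, intervalIntegral.integral_symm z m]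

noncomputable def travelTime (W : ℝ → ℝ) (a b z : ℝ) : ℝ :=
  ∫ s in (a + b) / 2..z, (√(2 * (W a - W s)))⁻¹

noncomputable def front (W : ℝ → ℝ) (a b : ℝ) : ℝ → ℝ :=
  Function.invFunOn (travelTime W a b) (Ioo a b)

structure IsHeteroclinicPair (W : ℝ → ℝ) (a b : ℝ) : Prop where
  contDiff : ContDiff ℝ 2 W
  lt : a < b
  deriv_left : deriv W a = 0
  deriv_right : deriv W b = 0
  eq : W a = W b
  lt_of_mem_Ioo : ∀ z ∈ Ioo a b, W z < W a

namespace IsHeteroclinicPair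

variable {W : ℝ → ℝ} {a b : ℝ}

theorem mid_mem (h : IsHeteroclinicPair W a b) : (a + b) / 2 ∈ Ioo a b :=
  ⟨by linarith [h.lt], by linarith [h.lt]⟩

theorem continuousOn_inv_sqrt (h : IsHeteroclinicPair W a b) :
    ContinuousOn (fun s => (√(2 * (W a - W s)))⁻¹) (Ioo a b) :=
  ContinuousOn.inv₀ (by have := h.contDiff.continuous; fun_prop)
    fun s hs => (Real.sqrt_pos.2 (by linarith [h.lt_of_mem_Ioo s hs])).ne'

theorem hasDerivAt_travelTime (h : IsHeteroclinicPair W a b) {z : ℝ} (hz : z ∈ Ioo a b) :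
    HasDerivAt (travelTime W a b) (√(2 * (W a - W z)))⁻¹ z :=
  intervalIntegral.integral_hasDerivAt_right
    (h.continuousOn_inv_sqrt.mono (ordConnected_Ioo.uIcc_subset h.mid_mem hz)).intervalIntegrable
    (h.continuousOn_inv_sqrt.stronglyMeasurableAtFilter isOpen_Ioo z hz)
    (h.continuousOn_inv_sqrt.continuousAt (isOpen_Ioo.mem_nhds hz))

theorem strictMonoOn_travelTime (h : IsHeteroclinicPair W a b) :
    StrictMonoOn (travelTime W a b) (Ioo a b) := by
  refine strictMonoOn_of_deriv_pos (convex_Ioo a b)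
    (fun z hz => (h.hasDerivAt_travelTime hz).continuousAt.continuousWithinAt) fun z hz => ?_
  rw [interior_Ioo] at hz
  rw [(h.hasDerivAt_travelTime hz).deriv]
  exact inv_pos.2 (Real.sqrt_pos.2 (by linarith [h.lt_of_mem_Ioo z hz]))

theorem tendsto_travelTime_nhdsGT (h : IsHeteroclinicPair W a b) :
    Tendsto (travelTime W a b) (𝓝[>] a) atBot := by
  obtain ⟨c, hc, hbound⟩ := exists_inv_abs_le_inv_sqrt_of_deriv_eq_zero h.contDiff h.deriv_left
  refine tendsto_intervalIntegral_atBot_of_inv_sub_le h.mid_mem.1 hc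
    (h.continuousOn_inv_sqrt.mono fun s hs => ⟨hs.1, hs.2.trans_lt h.mid_mem.2⟩) ?_
  filter_upwards [nhdsWithin_le_nhds hbound, Ioo_mem_nhdsGT h.lt] with s hs hsab
  simpa [abs_of_pos (sub_pos.2 hsab.1)] using hs (h.lt_of_mem_Ioo s hsab)

theorem tendsto_travelTime_nhdsLT (h : IsHeteroclinicPair W a b) :
    Tendsto (travelTime W a b) (𝓝[<] b) atTop := by
  obtain ⟨c, hc, hbound⟩ := exists_inv_abs_le_inv_sqrt_of_deriv_eq_zero h.contDiff h.deriv_right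
  refine tendsto_intervalIntegral_atTop_of_inv_sub_le h.mid_mem.2 hc
    (h.continuousOn_inv_sqrt.mono fun s hs => ⟨h.mid_mem.1.trans_le hs.1, hs.2⟩) ?_
  filter_upwards [nhdsWithin_le_nhds hbound, Ioo_mem_nhdsLT h.lt] with s hs hsab
  have hWs := h.lt_of_mem_Ioo s hsab
  rw [h.eq] at hWs ⊢
  simpa [abs_of_neg (sub_neg.2 hsab.2)] using hs hWs

theorem surjOn_travelTime (h : IsHeteroclinicPair W a b) :
    SurjOn (travelTime W a b) (Ioo a b) univ :=
  ContinuousOn.surjOn_of_tendsto (nonempty_Ioo.2 h.lt)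
    (fun z hz => (h.hasDerivAt_travelTime hz).continuousAt.continuousWithinAt)
    ((tendsto_comp_coe_Ioo_atBot h.lt).2 h.tendsto_travelTime_nhdsGT)
    ((tendsto_comp_coe_Ioo_atTop h.lt).2 h.tendsto_travelTime_nhdsLT)

theorem front_mem_Ioo (h : IsHeteroclinicPair W a b) (x : ℝ) : front W a b x ∈ Ioo a b :=
  (Function.invFunOn_pos (h.surjOn_travelTime (mem_univ x))).1

theorem travelTime_front (h : IsHeteroclinicPair W a b) (x : ℝ) :
    travelTime W a b (front W a b x) = x :=
  Function.invFunOn_eq (h.surjOn_travelTime (mem_univ x))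

theorem front_travelTime (h : IsHeteroclinicPair W a b) {z : ℝ} (hz : z ∈ Ioo a b) :
    front W a b (travelTime W a b z) = z :=
  h.strictMonoOn_travelTime.injOn.leftInvOn_invFunOn hz

theorem front_zero (h : IsHeteroclinicPair W a b) : front W a b 0 = (a + b) / 2 := by
  simpa [travelTime] using h.front_travelTime h.mid_mem

theorem strictMono_front (h : IsHeteroclinicPair W a b) : StrictMono (front W a b) := by
  intro x y hxy
  rwa [← h.strictMonoOn_travelTime.lt_iff_lt (h.front_mem_Ioo x) (h.front_mem_Ioo y),
    h.travelTime_front, h.travelTime_front]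

theorem range_front (h : IsHeteroclinicPair W a b) : range (front W a b) = Ioo a b :=
  Subset.antisymm (range_subset_iff.2 h.front_mem_Ioo)
    fun z hz => ⟨travelTime W a b z, h.front_travelTime hz⟩

theorem continuous_front (h : IsHeteroclinicPair W a b) : Continuous (front W a b) :=
  continuous_iff_continuousAt.2 fun x =>
    continuousAt_of_monotoneOn_of_image_mem_nhds (h.strictMono_front.monotone.monotoneOn univ)
      univ_mem (by rw [image_univ, h.range_front]; exact isOpen_Ioo.mem_nhds (h.front_mem_Ioo x))

theorem tendsto_front_atBot (h : IsHeteroclinicPair W a b) :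
    Tendsto (front W a b) atBot (𝓝 a) :=
  tendsto_atBot_isGLB h.strictMono_front.monotone (h.range_front ▸ isGLB_Ioo h.lt)

theorem tendsto_front_atTop (h : IsHeteroclinicPair W a b) :
    Tendsto (front W a b) atTop (𝓝 b) :=
  tendsto_atTop_isLUB h.strictMono_front.monotone (h.range_front ▸ isLUB_Ioo h.lt)

theorem hasDerivAt_front (h : IsHeteroclinicPair W a b) (x : ℝ) :
    HasDerivAt (front W a b) (√(2 * (W a - W (front W a b x)))) x := by
  simpa using (h.hasDerivAt_travelTime (h.front_mem_Ioo x)).of_local_left_inverse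
    h.continuous_front.continuousAt
    (inv_pos.2 (Real.sqrt_pos.2 (by linarith [h.lt_of_mem_Ioo _ (h.front_mem_Ioo x)]))).ne'
    (Eventually.of_forall h.travelTime_front)

theorem hasDerivAt_deriv_front (h : IsHeteroclinicPair W a b) (x : ℝ) :
    HasDerivAt (deriv (front W a b)) (-deriv W (front W a b x)) x := by
  have hpos : 0 < 2 * (W a - W (front W a b x)) := by
    linarith [h.lt_of_mem_Ioo _ (h.front_mem_Ioo x)]
  have hW := (h.contDiff.differentiable (by norm_num) (front W a b x)).hasDerivAt
  rw [funext fun y => (h.hasDerivAt_front y).deriv]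
  convert (((hW.comp x (h.hasDerivAt_front x)).const_sub (W a)).const_mul 2).sqrt hpos.ne' using 1
  · rfl
  · rw [Function.comp_apply]
    field_simp

theorem deriv_deriv_front (h : IsHeteroclinicPair W a b) (x : ℝ) :
    deriv (deriv (front W a b)) x = -deriv W (front W a b x) :=
  (h.hasDerivAt_deriv_front x).deriv

theorem contDiff_front (h : IsHeteroclinicPair W a b) : ContDiff ℝ 2 (front W a b) := by
  rw [show (2 : WithTop ℕ∞) = 1 + 1 from rfl, contDiff_succ_iff_deriv, contDiff_one_iff_deriv,
    funext h.deriv_deriv_front]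
  exact ⟨fun x => (h.hasDerivAt_front x).differentiableAt, by simp,
    fun x => (h.hasDerivAt_deriv_front x).differentiableAt,
    ((h.contDiff.continuous_deriv (by norm_num)).comp h.continuous_front).neg⟩

end IsHeteroclinicPair

theorem continuousAt_intervalIntegral_of_continuousAt {X : Type*} [TopologicalSpace X]
    [FirstCountableTopology X] {F : X → ℝ → ℝ} {u : X → ℝ} {x₀ : X} {z c d : ℝ}
    (hF_meas : ∀ x, AEStronglyMeasurable (F x) (volume.restrict (uIoc c d)))
    (hF : ∀ t ∈ Icc c d, ContinuousAt (Function.uncurry F) (x₀, t))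
    (hu : ContinuousAt u x₀) (hu₀ : u x₀ ∈ Ioo c d) (hz : z ∈ Ioo c d) :
    ContinuousAt (fun x => ∫ t in u x..z, F x t) x₀ := by
  have hIoc : uIoc c d ⊆ Icc c d := by
    rw [← uIcc_of_le (hz.1.trans hz.2).le]; exact uIoc_subset_uIcc
  obtain ⟨M, hM⟩ := isCompact_Icc.exists_bound_of_continuousOn fun t ht =>
    ((hF t ht).comp (continuousAt_const.prodMk continuousAt_id)).continuousWithinAt
  have hbound : ∀ᶠ x in 𝓝 x₀, ∀ t ∈ Icc c d, ‖F x t‖ ≤ M + 1 :=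
    isCompact_Icc.eventually_forall_of_forall_eventually fun t ht =>
      ((hF t ht).norm.eventually (gt_mem_nhds ((hM t ht).trans_lt (lt_add_one M)))).mono
        fun _ h => h.le
  have hprim := intervalIntegral.continuousAt_parametric_primitive_of_dominated (a₀ := z)
    (fun _ => M + 1) c d hF_meas
    (hbound.mono fun x hx =>
      ae_restrict_of_forall_mem measurableSet_uIoc fun t ht => hx t (hIoc ht))
    intervalIntegrable_const
    (ae_restrict_of_forall_mem measurableSet_uIoc fun t ht =>
      (hF t (hIoc ht)).comp (f := fun x => (x, t)) (continuousAt_id.prodMk continuousAt_const))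
    hz hu₀ Real.volume_singleton
  refine ((hprim.comp (f := fun x => (x, u x)) (continuousAt_id.prodMk hu)).neg).congr ?_
  exact Eventually.of_forall fun x => (intervalIntegral.integral_symm _ _).symm

theorem continuousAt_travelTime {X : Type*} [TopologicalSpace X] [FirstCountableTopology X]
    {V : ℝ × X → ℝ} (hV : Continuous V) {Zm Zp : X → ℝ} {lam₀ : X} {z : ℝ}
    (hZm : ContinuousAt Zm lam₀) (hZp : ContinuousAt Zp lam₀)
    (hwell : ∀ s ∈ Ioo (Zm lam₀) (Zp lam₀), V (s, lam₀) < V (Zm lam₀, lam₀))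
    (hz : z ∈ Ioo (Zm lam₀) (Zp lam₀)) :
    ContinuousAt (fun lam => travelTime (fun s => V (s, lam)) (Zm lam) (Zp lam) z) lam₀ := by
  have hmid : (Zm lam₀ + Zp lam₀) / 2 ∈ Ioo (Zm lam₀) (Zp lam₀) :=
    ⟨by linarith [hz.1, hz.2], by linarith [hz.1, hz.2]⟩
  obtain ⟨c, hc, hcz⟩ := exists_between (lt_min hz.1 hmid.1)
  obtain ⟨d, hzd, hd⟩ := exists_between (max_lt hz.2 hmid.2)
  unfold travelTime
  refine continuousAt_intervalIntegral_of_continuousAt (c := c) (d := d)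
    (fun lam => by fun_prop) (fun t ht => ?_) ((hZm.add hZp).div_const 2)
    ⟨(lt_min_iff.1 hcz).2, (max_lt_iff.1 hzd).2⟩ ⟨(lt_min_iff.1 hcz).1, (max_lt_iff.1 hzd).1⟩
  have hpos : 0 < 2 * (V (Zm lam₀, lam₀) - V (t, lam₀)) := by
    linarith [hwell t ⟨hc.trans_le ht.1, ht.2.trans_lt hd⟩]
  have hcont : ContinuousAt (fun q : X × ℝ => 2 * (V (Zm q.1, q.1) - V (q.2, q.1))) (lam₀, t) := by
    have := hZm.comp (continuousAt_fst (p := (lam₀, t)))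
    fun_prop
  exact (hcont.sqrt).inv₀ (Real.sqrt_pos.2 hpos).ne'

theorem continuousAt_uncurry_of_inverse {X : Type*} [TopologicalSpace X] {T ζ : X → ℝ → ℝ}
    {a b : X → ℝ} {p : X} {x : ℝ} (ha : ContinuousAt a p) (hb : ContinuousAt b p)
    (hT : ∀ᶠ q in 𝓝 p, StrictMonoOn (T q) (Ioo (a q) (b q)))
    (hζ : ∀ᶠ q in 𝓝 p, ∀ y, ζ q y ∈ Ioo (a q) (b q) ∧ T q (ζ q y) = y)
    (hTz : ∀ z ∈ Ioo (a p) (b p), ContinuousAt (fun q => T q z) p) :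
    ContinuousAt (Function.uncurry ζ) (p, x) := by
  have hmem : ∀ z ∈ Ioo (a p) (b p), ∀ᶠ r : X × ℝ in 𝓝 (p, x), z ∈ Ioo (a r.1) (b r.1) ∧
      StrictMonoOn (T r.1) (Ioo (a r.1) (b r.1)) ∧
      ζ r.1 r.2 ∈ Ioo (a r.1) (b r.1) ∧ T r.1 (ζ r.1 r.2) = r.2 := fun z hz =>
    continuousAt_fst.eventually ((ha.eventually_lt continuousAt_const hz.1).and
      ((continuousAt_const.eventually_lt hb hz.2).and (hT.and hζ))) |>.mono
      fun r ⟨hra, hrb, hrT, hrζ⟩ => ⟨⟨hra, hrb⟩, hrT, hrζ r.2⟩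
  obtain ⟨hζp, hTζp⟩ := hζ.self_of_nhds x
  refine tendsto_order.2 ⟨fun c hc => ?_, fun c hc => ?_⟩
  · obtain ⟨z, hcz, hzζ⟩ := exists_between (max_lt hc hζp.1)
    have hz : z ∈ Ioo (a p) (b p) := ⟨(max_lt_iff.1 hcz).2, hzζ.trans hζp.2⟩
    have hTzx : T p z < x := hTζp ▸ hT.self_of_nhds hz hζp hzζ
    have hTr : ContinuousAt (fun r : X × ℝ => T r.1 z) (p, x) :=
      ContinuousAt.comp (g := fun q => T q z) (hTz z hz) continuousAt_fst
    filter_upwards [hmem z hz, hTr.eventually_lt continuousAt_snd hTzx]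
      with r ⟨hzr, hmono, hζr, hTζr⟩ hlt
    exact (max_lt_iff.1 hcz).1.trans ((hmono.lt_iff_lt hzr hζr).1 (by rwa [hTζr]))
  · obtain ⟨z, hζz, hzc⟩ := exists_between (lt_min hc hζp.2)
    have hz : z ∈ Ioo (a p) (b p) := ⟨hζp.1.trans hζz, (lt_min_iff.1 hzc).2⟩
    have hxTz : x < T p z := hTζp ▸ hT.self_of_nhds hζp hz hζz
    have hTr : ContinuousAt (fun r : X × ℝ => T r.1 z) (p, x) :=
      ContinuousAt.comp (g := fun q => T q z) (hTz z hz) continuousAt_fst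
    filter_upwards [hmem z hz, continuousAt_snd.eventually_lt hTr hxTz]
      with r ⟨hzr, hmono, hζr, hTζr⟩ hlt
    exact ((hmono.lt_iff_lt hζr hzr).1 (by rwa [hTζr])).trans (lt_min_iff.1 hzc).1

theorem hasDerivAt_slice {V : ℝ × ℝ → ℝ} {z lam : ℝ} (hV : DifferentiableAt ℝ V (z, lam)) :
    HasDerivAt (fun t => V (t, lam)) (Vz V z lam) z :=
  hV.hasFDerivAt.comp_hasDerivAt z ((hasDerivAt_id z).prodMk (hasDerivAt_const z lam))

theorem local_curve_of_fronts_general (V : ℝ × ℝ → ℝ) (hV : ContDiff ℝ 2 V)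
    (lam₀ δ : ℝ)
    (Zm Zp : ℝ → ℝ)
    (hZm_cont : ContinuousOn Zm (Ioo (lam₀ - δ) (lam₀ + δ)))
    (hZp_cont : ContinuousOn Zp (Ioo (lam₀ - δ) (lam₀ + δ)))
    (hlt : ∀ lam ∈ Ioo (lam₀ - δ) (lam₀ + δ), Zm lam < Zp lam)
    (hrest_m : ∀ lam ∈ Ioo (lam₀ - δ) (lam₀ + δ), Vz V (Zm lam) lam = 0)
    (hrest_p : ∀ lam ∈ Ioo (lam₀ - δ) (lam₀ + δ), Vz V (Zp lam) lam = 0)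
    (hconj : ∀ lam ∈ Ioo (lam₀ - δ) (lam₀ + δ), V (Zm lam, lam) = V (Zp lam, lam))
    (hhetero : ∀ lam ∈ Ioo (lam₀ - δ) (lam₀ + δ),
      ∀ z ∈ Ioo (Zm lam) (Zp lam), V (z, lam) < V (Zm lam, lam)) :
    ∃ ζ : ℝ → ℝ → ℝ,
      (∀ lam ∈ Ioo (lam₀ - δ) (lam₀ + δ),
        StrictMono (ζ lam) ∧ ContDiff ℝ 2 (ζ lam) ∧
        (∀ x : ℝ, deriv (deriv (ζ lam)) x + Vz V (ζ lam x) lam = 0) ∧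
        Tendsto (ζ lam) atBot (nhds (Zm lam)) ∧
        Tendsto (ζ lam) atTop (nhds (Zp lam)) ∧
        ζ lam 0 = (Zm lam + Zp lam) / 2) ∧
      ContinuousOn (fun q : ℝ × ℝ => ζ q.1 q.2)
        (Ioo (lam₀ - δ) (lam₀ + δ) ×ˢ (univ : Set ℝ)) := by
  have hslice (lam z : ℝ) : HasDerivAt (fun t => V (t, lam)) (Vz V z lam) z :=
    hasDerivAt_slice (hV.differentiable (by norm_num) _)
  have hpair : ∀ lam ∈ Ioo (lam₀ - δ) (lam₀ + δ),
      IsHeteroclinicPair (fun z => V (z, lam)) (Zm lam) (Zp lam) := fun lam hl =>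
    ⟨hV.comp (contDiff_id.prodMk contDiff_const), hlt lam hl,
      (hslice lam _).deriv.trans (hrest_m lam hl), (hslice lam _).deriv.trans (hrest_p lam hl),
      hconj lam hl, hhetero lam hl⟩
  refine ⟨fun lam => front (fun z => V (z, lam)) (Zm lam) (Zp lam), fun lam hl => ?_, ?_⟩
  · have h := hpair lam hl
    refine ⟨h.strictMono_front, h.contDiff_front, fun x => ?_, h.tendsto_front_atBot,
      h.tendsto_front_atTop, h.front_zero⟩
    rw [h.deriv_deriv_front, (hslice lam _).deriv, neg_add_cancel]
  · rintro ⟨lam, x⟩ ⟨hl, -⟩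
    have hI : Ioo (lam₀ - δ) (lam₀ + δ) ∈ 𝓝 lam := isOpen_Ioo.mem_nhds hl
    exact (continuousAt_uncurry_of_inverse (hZm_cont.continuousAt hI) (hZp_cont.continuousAt hI)
      (eventually_of_mem hI fun q hq => (hpair q hq).strictMonoOn_travelTime)
      (eventually_of_mem hI fun q hq y =>
        ⟨(hpair q hq).front_mem_Ioo y, (hpair q hq).travelTime_front y⟩)
      fun z hz => continuousAt_travelTime hV.continuous (hZm_cont.continuousAt hI)
        (hZp_cont.continuousAt hI) (hhetero lam hl) hz).continuousWithinAt

/-- **Local curve of heteroclinic fronts.** Given a `C²` family of conjugate,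
nondegenerate pairs of rest points `Z₋(λ) < Z₊(λ)` for `λ` near `λ₀`, there is a
family of strictly increasing heteroclinic fronts of `ζ″ + V_z(ζ, λ) = 0`,
normalized at `x = 0`, depending continuously on `(λ, x)`. -/
theorem local_curve_of_fronts (V : ℝ × ℝ → ℝ) (hV : ContDiff ℝ 2 V)
    (lam₀ δ : ℝ) (hδ : 0 < δ)
    (Zm Zp : ℝ → ℝ)
    (hZm_cont : ContinuousOn Zm (Ioo (lam₀ - δ) (lam₀ + δ)))
    (hZp_cont : ContinuousOn Zp (Ioo (lam₀ - δ) (lam₀ + δ)))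
    (hlt : ∀ lam ∈ Ioo (lam₀ - δ) (lam₀ + δ), Zm lam < Zp lam)
    (hrest_m : ∀ lam ∈ Ioo (lam₀ - δ) (lam₀ + δ), Vz V (Zm lam) lam = 0)
    (hrest_p : ∀ lam ∈ Ioo (lam₀ - δ) (lam₀ + δ), Vz V (Zp lam) lam = 0)
    (hconj : ∀ lam ∈ Ioo (lam₀ - δ) (lam₀ + δ), V (Zm lam, lam) = V (Zp lam, lam))
    (hhetero : ∀ lam ∈ Ioo (lam₀ - δ) (lam₀ + δ),
      ∀ z ∈ Ioo (Zm lam) (Zp lam), V (z, lam) < V (Zm lam, lam))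
    (hspec_m : ∀ lam ∈ Ioo (lam₀ - δ) (lam₀ + δ), Vzz V (Zm lam) lam < 0)
    (hspec_p : ∀ lam ∈ Ioo (lam₀ - δ) (lam₀ + δ), Vzz V (Zp lam) lam < 0) :
    ∃ ζ : ℝ → ℝ → ℝ,
      (∀ lam ∈ Ioo (lam₀ - δ) (lam₀ + δ),
        StrictMono (ζ lam) ∧ ContDiff ℝ 2 (ζ lam) ∧
        (∀ x : ℝ, deriv (deriv (ζ lam)) x + Vz V (ζ lam x) lam = 0) ∧
        Tendsto (ζ lam) atBot (nhds (Zm lam)) ∧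
        Tendsto (ζ lam) atTop (nhds (Zp lam)) ∧
        ζ lam 0 = (Zm lam + Zp lam) / 2) ∧
      ContinuousOn (fun q : ℝ × ℝ => ζ q.1 q.2)
        (Ioo (lam₀ - δ) (lam₀ + δ) ×ˢ (univ : Set ℝ)) :=
  local_curve_of_fronts_general V hV lam₀ δ Zm Zp hZm_cont hZp_cont hlt hrest_m hrest_p hconj
    hhetero
end

section
/- Fix 0 < ρ2 < ρ1, λ ∈ (0,1), and set F² = (√ρ1 − √ρ2)/(√ρ1 + √ρ2), λ* = √ρ1/(√ρ1 + √ρ2). Define G(ζ) = (3ζ²/(2F²)) · [(λ+ζ)(1−λ−ζ+F²)ρ2 − (1−λ−ζ)(λ+ζ−F²)ρ1] / [(1−λ)²(λ+ζ)ρ2 + λ²(1−λ−ζ)ρ1], the right-hand side of the MCC equation. Then for every ζ ∈ (−λ, 1−λ) the denominator (1−λ)²(λ+ζ)ρ2 + λ²(1−λ−ζ)ρ1 is strictly positive, G(ζ) ≥ 0, and G(ζ) = 0 if and only if ζ = 0 or ζ = λ* − λ. -/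
/-- **Sign structure of the MCC right-hand side.** For `0 < ρ2 < ρ1`, `λ ∈ (0,1)`,
`F² = (√ρ1-√ρ2)/(√ρ1+√ρ2)` and `λ* = √ρ1/(√ρ1+√ρ2)`, the right-hand side
`G(ζ)` of the MCC equation has strictly positive denominator on `(-λ, 1-λ)`, is
nonnegative there, and vanishes exactly at `ζ = 0` and `ζ = λ* - λ`. -/
theorem mcc_rhs_sign (ρ1 ρ2 lam : ℝ) (hρ2 : 0 < ρ2) (hρ : ρ2 < ρ1)
    (hlam : lam ∈ Set.Ioo (0:ℝ) 1)
    (Fsq lamstar : ℝ)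
    (hFsq : Fsq = (Real.sqrt ρ1 - Real.sqrt ρ2) / (Real.sqrt ρ1 + Real.sqrt ρ2))
    (hls : lamstar = Real.sqrt ρ1 / (Real.sqrt ρ1 + Real.sqrt ρ2))
    (G : ℝ → ℝ)
    (hG : ∀ ζ : ℝ, G ζ = (3 * ζ^2 / (2 * Fsq)) *
      (((lam + ζ) * (1 - lam - ζ + Fsq) * ρ2 - (1 - lam - ζ) * (lam + ζ - Fsq) * ρ1) /
       ((1 - lam)^2 * (lam + ζ) * ρ2 + lam^2 * (1 - lam - ζ) * ρ1))) :
    ∀ ζ ∈ Set.Ioo (-lam) (1 - lam),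
      0 < (1 - lam)^2 * (lam + ζ) * ρ2 + lam^2 * (1 - lam - ζ) * ρ1 ∧
      0 ≤ G ζ ∧
      (G ζ = 0 ↔ ζ = 0 ∨ ζ = lamstar - lam) := by
  obtain ⟨hl0, hl1⟩ := hlam
  set s1 := Real.sqrt ρ1 with hs1def
  set s2 := Real.sqrt ρ2 with hs2def
  have hs2 : 0 < s2 := Real.sqrt_pos.2 hρ2
  have hs1 : 0 < s1 := Real.sqrt_pos.2 (hρ2.trans hρ)
  have hs12 : s2 < s1 := by
    simpa [hs1def, hs2def] using Real.sqrt_lt_sqrt hρ2.le hρ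
  have hρ1s : s1 ^ 2 = ρ1 := Real.sq_sqrt (hρ2.trans hρ).le
  have hρ2s : s2 ^ 2 = ρ2 := Real.sq_sqrt hρ2.le
  have hsum : 0 < s1 + s2 := by linarith
  have hF : 0 < Fsq := by
    rw [hFsq]; exact div_pos (by linarith) hsum
  intro ζ hζ
  obtain ⟨hz1, hz2⟩ := hζ
  have hη1 : 0 < lam + ζ := by linarith
  have hη2 : 0 < 1 - lam - ζ := by linarith
  have hD : 0 < (1 - lam)^2 * (lam + ζ) * ρ2 + lam^2 * (1 - lam - ζ) * ρ1 := by
    have h1 : 0 < (1 - lam)^2 * (lam + ζ) * ρ2 :=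
      mul_pos (mul_pos (pow_pos (by linarith) 2) hη1) hρ2
    have h2 : 0 < lam^2 * (1 - lam - ζ) * ρ1 :=
      mul_pos (mul_pos (pow_pos hl0 2) hη2) (hρ2.trans hρ)
    linarith
  have hN : (lam + ζ) * (1 - lam - ζ + Fsq) * ρ2 - (1 - lam - ζ) * (lam + ζ - Fsq) * ρ1
      = Fsq * ((s1 + s2) * (lam + ζ) - s1) ^ 2 := by
    rw [hFsq, ← hρ1s, ← hρ2s]
    field_simp
    ring
  have hGz : G ζ = (3 / 2) * (ζ ^ 2 * ((s1 + s2) * (lam + ζ) - s1) ^ 2) /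
      ((1 - lam)^2 * (lam + ζ) * ρ2 + lam^2 * (1 - lam - ζ) * ρ1) := by
    rw [hG, hN]
    field_simp
  have hXfac : (s1 + s2) * (lam + ζ) - s1 = (s1 + s2) * (ζ - (lamstar - lam)) := by
    rw [hls]
    field_simp
    ring
  have hXiff : ((s1 + s2) * (lam + ζ) - s1 = 0) ↔ ζ = lamstar - lam := by
    rw [hXfac, mul_eq_zero, sub_eq_zero]
    simp [hsum.ne']
  refine ⟨hD, ?_, ?_⟩
  · rw [hGz]
    positivity
  · rw [hGz, div_eq_zero_iff]
    constructor
    · rintro (h | h)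
      · rcases mul_eq_zero.1 h with h | h
        · norm_num at h
        · rcases mul_eq_zero.1 h with h | h
          · exact Or.inl (by simpa using sq_eq_zero_iff.1 h)
          · exact Or.inr (hXiff.1 (by simpa using sq_eq_zero_iff.1 h))
      · exact absurd h hD.ne'
    · rintro (h | h)
      · simp [h]
      · left
        have : (s1 + s2) * (lam + ζ) - s1 = 0 := hXiff.2 h
        simp [this]
end

section
/- Fix 0 < ρ2 < ρ1 and set F² = (√ρ1 − √ρ2)/(√ρ1 + √ρ2) and λ* = √ρ1/(√ρ1 + √ρ2) (so 0 < λ* < 1). Then for every real λ the identity (1/2)·[ρ2·((1−λ)/(1−λ*))² − ρ1·(λ/λ*)²] + ((ρ2 − ρ1)/F²)·(λ* − λ) = (ρ2 − ρ1)/2 holds. In fluid-dynamical terms: the downstream laminar conjugate flow, with lower-layer depth λ* and horizontal velocities λ/λ* in the lower layer and (1−λ)/(1−λ*) in the upper layer (determined by conservation of mass flux from the unit-velocity upstream flow with lower-layer depth λ), satisfies the dynamic (Bernoulli jump) boundary condition at interface height λ* − λ for every upstream depth λ, precisely when F² and λ* take the stated values. -/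
/-!
Write `a = √ρ1`, `b = √ρ2` and `s = a + b`, so that `λ* = a / s`, `1 - λ* = b / s` and
`F² = (a - b) / s`. Then both kinetic terms become `s²` times the upstream mass fluxes squared,
`ρ2 u2² = (s (1 - λ))²` and `ρ1 u1² = (s λ)²`, and `(ρ2 - ρ1) / F² = -s²`; the terms in `λ`
cancel and what remains is `s² / 2 - s a = (b² - a²) / 2`.
-/

lemma one_sub_div_add_self {a b : ℝ} (hs : a + b ≠ 0) : 1 - a / (a + b) = b / (a + b) := by
  rw [one_sub_div hs, add_sub_cancel_left]

lemma sq_mul_div_div_sq {c s : ℝ} (hc : c ≠ 0) (x : ℝ) : c ^ 2 * (x / (c / s)) ^ 2 = (s * x) ^ 2 := by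
  field_simp

lemma sub_sq_div_sub_div_add {a b : ℝ} (hab : a ≠ b) (hs : a + b ≠ 0) (y : ℝ) :
    (b ^ 2 - a ^ 2) / ((a - b) / (a + b)) * (a / (a + b) - y) = -(a + b) * (a - (a + b) * y) := by
  have hab' : a - b ≠ 0 := sub_ne_zero.2 hab
  field_simp
  ring

theorem conjugate_dynamic_condition_of_sqrt {a b : ℝ} (ha : a ≠ 0) (hb : b ≠ 0) (hab : a ≠ b)
    (hs : a + b ≠ 0) (lam : ℝ) :
    (1/2) * (b ^ 2 * ((1 - lam) / (1 - a / (a + b))) ^ 2 - a ^ 2 * (lam / (a / (a + b))) ^ 2)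
      + ((b ^ 2 - a ^ 2) / ((a - b) / (a + b))) * (a / (a + b) - lam) = (b ^ 2 - a ^ 2) / 2 := by
  rw [one_sub_div_add_self hs, sq_mul_div_div_sq hb, sq_mul_div_div_sq ha,
    sub_sq_div_sub_div_add hab hs]
  ring

/-- **The conjugate laminar flow satisfies the dynamic condition.** With
`F² = (√ρ1-√ρ2)/(√ρ1+√ρ2)` and `λ* = √ρ1/(√ρ1+√ρ2)` (so `0 < λ* < 1`), for every
upstream depth `λ` the downstream laminar flow with lower-layer depth `λ*` and
layer speeds `λ/λ*`, `(1-λ)/(1-λ*)` satisfies the Bernoulli jump condition at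
interface height `λ* − λ`. -/
theorem conjugate_laminar_dynamic_condition (ρ1 ρ2 : ℝ) (hρ2 : 0 < ρ2) (hρ : ρ2 < ρ1)
    (Fsq lamstar : ℝ)
    (hFsq : Fsq = (Real.sqrt ρ1 - Real.sqrt ρ2) / (Real.sqrt ρ1 + Real.sqrt ρ2))
    (hls : lamstar = Real.sqrt ρ1 / (Real.sqrt ρ1 + Real.sqrt ρ2)) :
    (0 < lamstar ∧ lamstar < 1) ∧
    ∀ lam : ℝ,
      (1/2) * (ρ2 * ((1 - lam) / (1 - lamstar))^2 - ρ1 * (lam / lamstar)^2)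
        + ((ρ2 - ρ1) / Fsq) * (lamstar - lam) = (ρ2 - ρ1) / 2 := by
  obtain ⟨b, hb, rfl⟩ : ∃ b > 0, b ^ 2 = ρ2 := ⟨√ρ2, Real.sqrt_pos.2 hρ2, Real.sq_sqrt hρ2.le⟩
  obtain ⟨a, ha, rfl⟩ : ∃ a > 0, a ^ 2 = ρ1 :=
    ⟨√ρ1, Real.sqrt_pos.2 (hρ2.trans hρ), Real.sq_sqrt (hρ2.trans hρ).le⟩
  rw [Real.sqrt_sq ha.le, Real.sqrt_sq hb.le] at hFsq hls
  subst hFsq hls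
  have hba : b < a := (pow_lt_pow_iff_left₀ hb.le ha.le two_ne_zero).1 hρ
  refine ⟨⟨by positivity, (div_lt_one (by positivity)).2 (by linarith)⟩, ?_⟩
  exact conjugate_dynamic_condition_of_sqrt ha.ne' hb.ne' hba.ne' (by positivity)
end
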